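/- Let Ψ:[t₀,∞)→(0,∞) be non-decreasing. Then K(3Ψ) ⊂ G₁(Ψ), where G₁(Ψ) := {x∈[0,1) irrational : a_{n+1}(x) > Ψ(q_n(x)) for infinitely many n}. In particular, since G₁(Ψ) ⊂ G(Ψ), one has K(3Ψ) ⊂ G(Ψ). -/

import Mathlib

open Filter MeasureTheory Set

/-- The Gauss map `T(x) = 1/x mod 1`, with `T(0) = 0`. -/
noncomputable def gaussMap (x : ℝ) : ℝ := if x = 0 then 0 else Int.fract (1 / x)

/-- `cfA x n` is the `n`-th partial quotient `a_n(x)` of the continued fraction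
expansion of `x ∈ [0,1)`, for `n ≥ 1`: `a_n(x) = ⌊1 / T^{n-1}(x)⌋`. -/
noncomputable def cfA (x : ℝ) (n : ℕ) : ℕ := ⌊1 / (gaussMap^[n - 1] x)⌋₊

/-- `cfQ x n` is the denominator `q_n(x)` of the `n`-th convergent of `x`:
`q₀ = 1`, `q₁ = a₁`, `q_{n+2} = a_{n+2} q_{n+1} + q_n`. -/
noncomputable def cfQ (x : ℝ) : ℕ → ℕ
  | 0 => 1
  | 1 => cfA x 1
  | (n + 2) => cfA x (n + 2) * cfQ x (n + 1) + cfQ x n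

/-- `K(Φ)`: the set of `x ∈ [0,1)` with `|x - p/q| < 1/(q² Φ(q))` for infinitely many
pairs `(p, q) ∈ ℤ × ℕ` (with `q > 0`). -/
def KSet (Φ : ℝ → ℝ) : Set ℝ :=
  {x | x ∈ Ico (0 : ℝ) 1 ∧
    {r : ℤ × ℕ | 0 < r.2 ∧ |x - (r.1 : ℝ) / r.2| < 1 / ((r.2 : ℝ) ^ 2 * Φ r.2)}.Infinite}

/-- `G₁(Ψ)`: the set of irrational `x ∈ [0,1)` with `a_{n+1}(x) > Ψ(q_n(x))` for
infinitely many `n`. -/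
def G1Set (Ψ : ℝ → ℝ) : Set ℝ :=
  {x | x ∈ Ico (0 : ℝ) 1 ∧ Irrational x ∧
    {n : ℕ | 0 < n ∧ Ψ (cfQ x n) < (cfA x (n + 1) : ℝ)}.Infinite}

/-- `G(Ψ)`: the set of irrational `x ∈ [0,1)` with `a_n(x) a_{n+1}(x) > Ψ(q_n(x))` for
infinitely many `n`. -/
def GSet (Ψ : ℝ → ℝ) : Set ℝ :=
  {x | x ∈ Ico (0 : ℝ) 1 ∧ Irrational x ∧
    {n : ℕ | 0 < n ∧ Ψ (cfQ x n) < (cfA x n : ℝ) * cfA x (n + 1)}.Infinite}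

/-!
If `|x - p/q| < 1/(3 Ψ(q) q²)` with `Ψ(q) ≥ 1`, Legendre's theorem makes `p/q` a convergent
`p_m/q_m` with `q_m ≤ q`. On the other hand `(q_m x - p_m)(q_{m+1} + q_m T^{m+1} x) = ±1`, so
`|x - p_m/q_m| > 1/(q_m² (a_{m+1} + 2))`. Comparing the two bounds gives `Ψ(q) < a_{m+1}`, and
monotonicity gives `Ψ(q_m) ≤ Ψ(q)`. Infinitely many such approximations force arbitrarily large
`m`, because the finitely many early convergents keep a positive distance from the irrational `x`.
If instead `Ψ < 1` on `[t₀, ∞)`, every large `n` works since `a_{n+1} ≥ 1`; the same bound gives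
`G₁(Ψ) ⊆ G(Ψ)`.
-/

noncomputable def cfP (x : ℝ) : ℕ → ℕ
  | 0 => 0
  | 1 => 1
  | (n + 2) => cfA x (n + 2) * cfP x (n + 1) + cfP x n

section GaussMap

variable {x : ℝ}

theorem gaussMap_eq_fract_inv (x : ℝ) : gaussMap x = Int.fract x⁻¹ := by
  by_cases hx : x = 0 <;> simp [gaussMap, hx]

theorem gaussMap_mem_Ico (x : ℝ) : gaussMap x ∈ Ico 0 1 := by
  rw [gaussMap_eq_fract_inv]
  exact ⟨Int.fract_nonneg _, Int.fract_lt_one _⟩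

theorem irrational_gaussMap (hx : Irrational x) : Irrational (gaussMap x) := by
  rw [gaussMap_eq_fract_inv, ← Int.self_sub_floor]
  exact hx.inv.sub_intCast _

theorem irrational_iterate_gaussMap (hx : Irrational x) (n : ℕ) :
    Irrational (gaussMap^[n] x) := by
  induction n with
  | zero => exact hx
  | succ n ih => rw [Function.iterate_succ_apply']; exact irrational_gaussMap ih

theorem iterate_gaussMap_mem_Ico (hx : x ∈ Ico 0 1) : ∀ n, gaussMap^[n] x ∈ Ico 0 1
  | 0 => hx
  | n + 1 => by rw [Function.iterate_succ_apply']; exact gaussMap_mem_Ico _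

theorem iterate_gaussMap_pos (hx : Irrational x) (hx01 : x ∈ Ico 0 1) (n : ℕ) :
    0 < gaussMap^[n] x :=
  (iterate_gaussMap_mem_Ico hx01 n).1.lt_of_ne (irrational_iterate_gaussMap hx n).ne_zero.symm

theorem cfA_gaussMap (x : ℝ) (n : ℕ) : cfA (gaussMap x) (n + 1) = cfA x (n + 2) :=
  rfl

theorem cfA_one (x : ℝ) : cfA x 1 = ⌊x⁻¹⌋₊ := by
  simp [cfA]

theorem iterate_gaussMap_mul_cfA_add (hx : Irrational x) (hx01 : x ∈ Ico 0 1) (n : ℕ) :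
    gaussMap^[n] x * (cfA x (n + 1) + gaussMap^[n + 1] x) = 1 := by
  set y := gaussMap^[n] x
  have hy : 0 < y := iterate_gaussMap_pos hx hx01 n
  have hfloor : (cfA x (n + 1) : ℝ) = ⌊y⁻¹⌋ := by
    simpa [cfA, y] using natCast_floor_eq_intCast_floor (inv_nonneg.2 hy.le)
  rw [hfloor, Function.iterate_succ_apply', gaussMap_eq_fract_inv, Int.floor_add_fract,
    mul_inv_cancel₀ hy.ne']

theorem one_le_cfA (hx : Irrational x) (hx01 : x ∈ Ico 0 1) (n : ℕ) : 1 ≤ cfA x (n + 1) := by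
  simp only [cfA, Nat.add_sub_cancel, Nat.one_le_floor_iff]
  exact one_le_one_div (iterate_gaussMap_pos hx hx01 n) (iterate_gaussMap_mem_Ico hx01 n).2.le

end GaussMap

section Continuants

variable {x : ℝ}

theorem cfP_add_two (x : ℝ) (n : ℕ) : cfP x (n + 2) = cfA x (n + 2) * cfP x (n + 1) + cfP x n :=
  rfl

theorem cfQ_add_two (x : ℝ) (n : ℕ) : cfQ x (n + 2) = cfA x (n + 2) * cfQ x (n + 1) + cfQ x n :=
  rfl

theorem cfQ_le_succ (hx : Irrational x) (hx01 : x ∈ Ico 0 1) : ∀ n, cfQ x n ≤ cfQ x (n + 1)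
  | 0 => one_le_cfA hx hx01 0
  | n + 1 => by
    rw [cfQ_add_two]
    nlinarith [one_le_cfA hx hx01 (n + 1)]

theorem one_le_cfQ (hx : Irrational x) (hx01 : x ∈ Ico 0 1) (n : ℕ) : 1 ≤ cfQ x n :=
  monotone_nat_of_le_succ (cfQ_le_succ hx hx01) (Nat.zero_le n)

theorem cfQ_succ_le (hx : Irrational x) (hx01 : x ∈ Ico 0 1) :
    ∀ n, cfQ x (n + 1) ≤ (cfA x (n + 1) + 1) * cfQ x n
  | 0 => by simp [cfQ]
  | n + 1 => by
    rw [cfQ_add_two]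
    nlinarith [cfQ_le_succ hx hx01 n]

theorem le_cfQ (hx : Irrational x) (hx01 : x ∈ Ico 0 1) (n : ℕ) : n ≤ cfQ x n := by
  induction n using Nat.twoStepInduction with
  | zero => exact Nat.zero_le _
  | one => exact one_le_cfQ hx hx01 1
  | more n _ ih =>
    rw [cfQ_add_two]
    nlinarith [one_le_cfA hx hx01 (n + 1), one_le_cfQ hx hx01 n]

theorem tendsto_cfQ_atTop (hx : Irrational x) (hx01 : x ∈ Ico 0 1) :
    Tendsto (fun n => (cfQ x n : ℝ)) atTop atTop :=
  tendsto_atTop_mono (fun n => by exact_mod_cast le_cfQ hx hx01 n) tendsto_natCast_atTop_atTop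

theorem cfP_succ_mul_cfQ_sub (x : ℝ) (n : ℕ) :
    (cfP x (n + 1) : ℤ) * cfQ x n - cfP x n * cfQ x (n + 1) = (-1) ^ n := by
  induction n with
  | zero => simp [cfP, cfQ]
  | succ n ih =>
    push_cast [cfP_add_two, cfQ_add_two]
    linear_combination (-1 : ℤ) * ih

theorem cfP_coprime_cfQ (x : ℝ) : ∀ n, Nat.Coprime (cfP x n) (cfQ x n)
  | 0 => by simp [cfP, cfQ]
  | n + 1 => by
    rw [← Nat.isCoprime_iff_coprime]
    refine ⟨(-1) ^ n * cfQ x n, -(-1) ^ n * cfP x n, ?_⟩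
    have hsq : ((-1 : ℤ) ^ n) ^ 2 = 1 := by rw [← pow_mul, mul_comm, pow_mul, neg_one_sq, one_pow]
    linear_combination (-1) ^ n * cfP_succ_mul_cfQ_sub x n + hsq

end Continuants

section Approximation

variable {x : ℝ}

theorem mul_cfQ_succ_sub_cfP_succ (hx : Irrational x) (hx01 : x ∈ Ico 0 1) (n : ℕ) :
    x * cfQ x (n + 1) - cfP x (n + 1) = -gaussMap^[n + 1] x * (x * cfQ x n - cfP x n) := by
  induction n with
  | zero =>
    have h := iterate_gaussMap_mul_cfA_add hx hx01 0
    simp only [cfP, cfQ, Nat.cast_one, Nat.cast_zero, zero_add, Function.iterate_zero, id_eq] at h ⊢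
    linear_combination h
  | succ n ih =>
    push_cast [cfP_add_two, cfQ_add_two]
    linear_combination (cfA x (n + 2) + gaussMap^[n + 2] x) * ih -
      (x * cfQ x n - cfP x n) * iterate_gaussMap_mul_cfA_add hx hx01 (n + 1)

theorem iterate_gaussMap_mul_cfQ_add (hx : Irrational x) (hx01 : x ∈ Ico 0 1) (n : ℕ) :
    gaussMap^[n + 1] x * (cfQ x (n + 2) + cfQ x (n + 1) * gaussMap^[n + 2] x) =
      cfQ x (n + 1) + cfQ x n * gaussMap^[n + 1] x := by
  push_cast [cfQ_add_two]
  linear_combination (cfQ x (n + 1) : ℝ) * iterate_gaussMap_mul_cfA_add hx hx01 (n + 1)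

theorem mul_cfQ_sub_cfP_mul_cfQ_add (hx : Irrational x) (hx01 : x ∈ Ico 0 1) (n : ℕ) :
    (x * cfQ x n - cfP x n) * (cfQ x (n + 1) + cfQ x n * gaussMap^[n + 1] x) = (-1) ^ n := by
  induction n with
  | zero => simpa [cfP, cfQ] using iterate_gaussMap_mul_cfA_add hx hx01 0
  | succ n ih =>
    linear_combination (cfQ x (n + 2) + cfQ x (n + 1) * gaussMap^[n + 2] x) *
        mul_cfQ_succ_sub_cfP_succ hx hx01 n -
      (x * cfQ x n - cfP x n) * iterate_gaussMap_mul_cfQ_add hx hx01 n - ih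

theorem one_div_lt_abs_sub_cfP_div_cfQ (hx : Irrational x) (hx01 : x ∈ Ico 0 1) (n : ℕ) :
    1 / ((cfQ x n : ℝ) ^ 2 * (cfA x (n + 1) + 2)) < |x - cfP x n / cfQ x n| := by
  set t := gaussMap^[n + 1] x
  have hq : (0 : ℝ) < cfQ x n := by exact_mod_cast one_le_cfQ hx hx01 n
  have ht : t < 1 := (iterate_gaussMap_mem_Ico hx01 (n + 1)).2
  have hD : 0 < (cfQ x (n + 1) : ℝ) + cfQ x n * t := by
    have := iterate_gaussMap_pos hx hx01 (n + 1)
    positivity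
  have hDlt : (cfQ x (n + 1) : ℝ) + cfQ x n * t < (cfA x (n + 1) + 2) * cfQ x n := by
    have : (cfQ x (n + 1) : ℝ) ≤ (cfA x (n + 1) + 1) * cfQ x n := by
      exact_mod_cast cfQ_succ_le hx hx01 n
    nlinarith
  have hE : |x * cfQ x n - cfP x n| = 1 / (cfQ x (n + 1) + cfQ x n * t) := by
    rw [eq_div_iff hD.ne', ← abs_of_pos hD, ← abs_mul, mul_cfQ_sub_cfP_mul_cfQ_add hx hx01 n,
      abs_pow, abs_neg, abs_one, one_pow]
  rw [show x - cfP x n / cfQ x n = (x * cfQ x n - cfP x n) / cfQ x n by field_simp, abs_div,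
    hE, abs_of_pos hq, div_div]
  apply one_div_lt_one_div_of_lt (by positivity)
  nlinarith

end Approximation

section Convergents

variable {x : ℝ}

theorem cfP_succ_eq_cfQ_gaussMap (x : ℝ) (n : ℕ) : cfP x (n + 1) = cfQ (gaussMap x) n := by
  induction n using Nat.twoStepInduction with
  | zero => rfl
  | one => simp [cfP, cfQ, cfA_gaussMap]
  | more n ih₀ ih₁ => rw [cfP_add_two, cfQ_add_two, ← ih₀, ← ih₁, cfA_gaussMap]

theorem cfQ_succ_eq_cfQ_gaussMap (x : ℝ) (n : ℕ) :
    cfQ x (n + 1) = cfA x 1 * cfQ (gaussMap x) n + cfP (gaussMap x) n := by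
  induction n using Nat.twoStepInduction with
  | zero => simp [cfQ, cfP]
  | one => simp [cfQ, cfP, cfA_gaussMap]; ring
  | more n ih₀ ih₁ =>
    rw [cfQ_add_two, ih₁, ih₀, cfQ_add_two, cfP_add_two, cfA_gaussMap]
    ring

theorem convergent_inv (hx : Irrational x) (hx01 : x ∈ Ico 0 1) (n : ℕ) :
    Real.convergent x⁻¹ n = (cfQ x (n + 1) : ℚ) / cfP x (n + 1) := by
  induction n generalizing x with
  | zero =>
    have h := Int.natCast_floor_eq_floor (inv_nonneg.2 hx01.1)
    simp [cfP, cfQ, cfA_one, ← h]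
  | succ n ih =>
    have hq : (cfQ (gaussMap x) (n + 1) : ℚ) ≠ 0 := by
      exact_mod_cast Nat.one_le_iff_ne_zero.1
        (one_le_cfQ (irrational_gaussMap hx) (gaussMap_mem_Ico x) (n + 1))
    have h := Int.natCast_floor_eq_floor (inv_nonneg.2 hx01.1)
    rw [Real.convergent_succ, ← gaussMap_eq_fract_inv,
      ih (irrational_gaussMap hx) (gaussMap_mem_Ico x), cfQ_succ_eq_cfQ_gaussMap x (n + 1),
      cfP_succ_eq_cfQ_gaussMap x (n + 1), ← h, ← cfA_one, inv_div]
    push_cast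
    field_simp

theorem convergent_eq_cfP_div_cfQ (hx : Irrational x) (hx01 : x ∈ Ico 0 1) :
    ∀ n, Real.convergent x n = (cfP x n : ℚ) / cfQ x n
  | 0 => by simp [cfP, cfQ, Int.floor_eq_zero_iff.2 hx01]
  | n + 1 => by
    rw [Real.convergent_succ, Int.floor_eq_zero_iff.2 hx01, Int.fract_eq_self.2 hx01,
      convergent_inv hx hx01 n]
    simp

theorem den_convergent (hx : Irrational x) (hx01 : x ∈ Ico 0 1) (n : ℕ) :
    (Real.convergent x n).den = cfQ x n := by
  have hq : (0 : ℤ) < cfQ x n := by exact_mod_cast one_le_cfQ hx hx01 n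
  have h := Rat.den_div_eq_of_coprime (a := cfP x n) hq (by simpa using cfP_coprime_cfQ x n)
  rw [Int.cast_natCast, Int.cast_natCast] at h
  rw [convergent_eq_cfP_div_cfQ hx hx01]
  exact Int.ofNat_inj.1 h

end Convergents

section Legendre

variable {x : ℝ}

theorem den_intCast_div_natCast_le (p : ℤ) {q : ℕ} (hq : 0 < q) : ((p : ℚ) / q).den ≤ q := by
  have h := Rat.den_dvd p q
  rw [Rat.divInt_eq_div, Int.cast_natCast] at h
  exact Nat.le_of_dvd hq (by exact_mod_cast h)

theorem exists_convergent_eq_and_lt_cfA (hx : Irrational x) (hx01 : x ∈ Ico 0 1) {p : ℤ}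
    {q : ℕ} (hq : 0 < q) {c : ℝ} (hc : 1 ≤ c) (happ : |x - p / q| < 1 / (q ^ 2 * (3 * c))) :
    ∃ m, (Real.convergent x m : ℝ) = p / q ∧ cfQ x m ≤ q ∧ c < cfA x (m + 1) := by
  set r : ℚ := p / q
  have hr : (r : ℝ) = p / q := by simp [r]
  have hqR : (0 : ℝ) < q := by exact_mod_cast hq
  have hleg : |x - r| < 1 / (2 * (r.den : ℝ) ^ 2) := by
    rw [hr]
    refine happ.trans_le (one_div_le_one_div_of_le (by positivity) ?_)
    have : (r.den : ℝ) ≤ q := Nat.cast_le.2 (den_intCast_div_natCast_le p hq)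
    nlinarith
  obtain ⟨m, hm⟩ := Real.exists_rat_eq_convergent hleg
  have hqm : cfQ x m ≤ q := den_convergent hx hx01 m ▸ hm ▸ den_intCast_div_natCast_le p hq
  have hconv : (Real.convergent x m : ℝ) = cfP x m / cfQ x m := by
    rw [convergent_eq_cfP_div_cfQ hx hx01, Rat.cast_div, Rat.cast_natCast, Rat.cast_natCast]
  refine ⟨m, hm ▸ hr, hqm, ?_⟩
  have hlow := one_div_lt_abs_sub_cfP_div_cfQ hx hx01 m
  rw [← hconv, ← hm, hr] at hlow
  have hQm : (0 : ℝ) < cfQ x m := by exact_mod_cast one_le_cfQ hx hx01 m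
  have hlt := (one_div_lt_one_div (by positivity) (by positivity)).1 (hlow.trans happ)
  have hsq : (cfQ x m : ℝ) ^ 2 ≤ q ^ 2 := by gcongr
  have h3c : 3 * c < cfA x (m + 1) + 2 :=
    lt_of_mul_lt_mul_left (hlt.trans_le (by gcongr)) (sq_nonneg (q : ℝ))
  linarith

theorem finite_setOf_abs_sub_intCast_div_lt (x c : ℝ) {q : ℕ} (hq : 0 < q) :
    {p : ℤ | |x - p / q| < c}.Finite := by
  refine (Set.finite_Icc ⌊(x - c) * q⌋ ⌈(x + c) * q⌉).subset fun p hp => ?_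
  have hqR : (0 : ℝ) < q := by exact_mod_cast hq
  replace hp : |x - p / q| < c := hp
  obtain ⟨hlo, hhi⟩ := abs_sub_lt_iff.1 hp
  have hlo' := (lt_div_iff₀ hqR).1 (by linarith : x - c < p / q)
  have hhi' := (div_lt_iff₀ hqR).1 (by linarith : p / q < x + c)
  exact ⟨Int.floor_le_iff.2 (by linarith), Int.le_ceil_iff.2 (by linarith)⟩

theorem exists_lt_snd_of_mem_KSet {Φ : ℝ → ℝ} (hx : x ∈ KSet Φ) (M : ℕ) :
    ∃ r : ℤ × ℕ, 0 < r.2 ∧ |x - r.1 / r.2| < 1 / ((r.2 : ℝ) ^ 2 * Φ r.2) ∧ M < r.2 := by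
  by_contra! h
  refine hx.2 (((Finset.Icc 1 M).finite_toSet.biUnion fun q hq =>
    (finite_setOf_abs_sub_intCast_div_lt x (1 / ((q : ℝ) ^ 2 * Φ q))
      (Finset.mem_Icc.1 hq).1).prod (finite_singleton q)).subset ?_)
  rintro ⟨p, q⟩ ⟨hq, happ⟩
  exact mem_biUnion (Finset.mem_Icc.2 ⟨hq, h (p, q) hq happ⟩) ⟨happ, rfl⟩

theorem Irrational.exists_pos_forall_le_abs_sub (hx : Irrational x) (r : ℕ → ℚ) (N : ℕ) :
    ∃ ε > 0, ∀ m ≤ N, ε ≤ |x - r m| := by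
  obtain ⟨m₀, -, hm₀⟩ :=
    (Finset.range (N + 1)).exists_min_image (fun m => |x - r m|) ⟨0, by simp⟩
  exact ⟨_, abs_pos.2 (sub_ne_zero.2 (hx.ne_rat _)),
    fun m hm => hm₀ m (Finset.mem_range.2 (Nat.lt_succ_of_le hm))⟩

theorem exists_gt_lt_cfA_of_mem_KSet {Ψ : ℝ → ℝ} (hx : Irrational x)
    (hxK : x ∈ KSet (fun t => 3 * Ψ t)) (hΨ : ∀ᶠ q : ℕ in atTop, 1 ≤ Ψ q) (N : ℕ) :
    ∃ m > N, ∃ q : ℕ, cfQ x m ≤ q ∧ Ψ q < cfA x (m + 1) := by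
  obtain ⟨ε, hε, hεle⟩ := hx.exists_pos_forall_le_abs_sub (Real.convergent x) N
  obtain ⟨Q, hQ⟩ := eventually_atTop.1 hΨ
  obtain ⟨⟨p, q⟩, hq, happ, hqM⟩ := exists_lt_snd_of_mem_KSet hxK (max Q ⌈ε⁻¹⌉₊)
  dsimp only at hq happ hqM
  have hΨq : 1 ≤ Ψ q := hQ q (le_max_left _ _ |>.trans hqM.le)
  obtain ⟨m, hm, hqm, hlt⟩ := exists_convergent_eq_and_lt_cfA hx hxK.1 hq hΨq happ
  refine ⟨m, ?_, q, hqm, hlt⟩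
  by_contra! hmN
  have hqR : (1 : ℝ) ≤ q := by exact_mod_cast hq
  have hεq : 1 / (q : ℝ) < ε := by
    rw [one_div]
    exact inv_lt_of_inv_lt₀ hε (Nat.lt_of_ceil_lt ((le_max_right _ _).trans_lt hqM))
  have hbound : 1 / ((q : ℝ) ^ 2 * (3 * Ψ q)) ≤ 1 / q :=
    one_div_le_one_div_of_le (by positivity) (by nlinarith)
  linarith [hεle m hmN, hm ▸ happ]

end Legendre

theorem mem_G1Set_of_mem_KSet {t₀ : ℝ} {Ψ : ℝ → ℝ} (hΨ : MonotoneOn Ψ (Ici t₀)) {x : ℝ}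
    (hxK : x ∈ KSet (fun t => 3 * Ψ t)) (hx : Irrational x) : x ∈ G1Set Ψ := by
  refine ⟨hxK.1, hx, ?_⟩
  rw [← Nat.frequently_atTop_iff_infinite]
  have hQ : ∀ᶠ n in atTop, 0 < n ∧ t₀ ≤ cfQ x n :=
    (eventually_gt_atTop 0).and ((tendsto_cfQ_atTop hx hxK.1).eventually_ge_atTop t₀)
  by_cases hsmall : ∀ t ≥ t₀, Ψ t < 1
  · refine (hQ.mono fun n hn => ⟨hn.1, (hsmall _ hn.2).trans_le ?_⟩).frequently
    exact_mod_cast one_le_cfA hx hxK.1 n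
  push Not at hsmall
  obtain ⟨t₁, ht₀₁, ht₁⟩ := hsmall
  have hΨ1 : ∀ᶠ q : ℕ in atTop, 1 ≤ Ψ q :=
    (tendsto_natCast_atTop_atTop.eventually_ge_atTop t₁).mono fun q hq =>
      ht₁.trans (hΨ ht₀₁ (ht₀₁.trans hq) hq)
  obtain ⟨N, hN⟩ := eventually_atTop.1 hQ
  refine frequently_atTop.2 fun N' => ?_
  obtain ⟨m, hm, q, hqm, hlt⟩ := exists_gt_lt_cfA_of_mem_KSet hx hxK hΨ1 (max N N')
  obtain ⟨hm0, hmt₀⟩ := hN m (le_max_left _ _ |>.trans hm.le)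
  have hqm' : (cfQ x m : ℝ) ≤ q := by exact_mod_cast hqm
  exact ⟨m, le_max_right _ _ |>.trans hm.le, hm0,
    (hΨ hmt₀ (hmt₀.trans hqm') hqm').trans_lt hlt⟩

theorem G1Set_subset_GSet (Ψ : ℝ → ℝ) : G1Set Ψ ⊆ GSet Ψ := by
  rintro x ⟨hx01, hx, hinf⟩
  refine ⟨hx01, hx, hinf.mono ?_⟩
  rintro n ⟨hn, hlt⟩
  obtain ⟨k, rfl⟩ := Nat.exists_eq_add_of_lt hn
  have ha : (1 : ℝ) ≤ cfA x (k + 1) := by exact_mod_cast one_le_cfA hx hx01 k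
  refine ⟨hn, hlt.trans_le (le_mul_of_one_le_left (Nat.cast_nonneg _) ?_)⟩
  simpa using ha

theorem KSet_subset_G1Set_subset_GSet_general
    (t₀ : ℝ) (Ψ : ℝ → ℝ)
    (hΨmono : MonotoneOn Ψ (Ici t₀)) :
    (∀ x ∈ KSet (fun t => 3 * Ψ t), Irrational x → x ∈ G1Set Ψ) ∧
    G1Set Ψ ⊆ GSet Ψ ∧
    (∀ x ∈ KSet (fun t => 3 * Ψ t), Irrational x → x ∈ GSet Ψ) :=
  ⟨fun _ hxK hx => mem_G1Set_of_mem_KSet hΨmono hxK hx, G1Set_subset_GSet Ψ,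
    fun _ hxK hx => G1Set_subset_GSet Ψ (mem_G1Set_of_mem_KSet hΨmono hxK hx)⟩

/-- **`K(3Ψ) ⊂ G₁(Ψ) ⊂ G(Ψ)`** (within the irrational numbers, on which the sets `G₁`
and `G` are defined). -/
theorem KSet_subset_G1Set_subset_GSet
    (t₀ : ℝ) (Ψ : ℝ → ℝ)
    (hΨpos : ∀ t ∈ Ici t₀, 0 < Ψ t) (hΨmono : MonotoneOn Ψ (Ici t₀)) :
    (∀ x ∈ KSet (fun t => 3 * Ψ t), Irrational x → x ∈ G1Set Ψ) ∧
    G1Set Ψ ⊆ GSet Ψ ∧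
    (∀ x ∈ KSet (fun t => 3 * Ψ t), Irrational x → x ∈ GSet Ψ) :=
  KSet_subset_G1Set_subset_GSet_general t₀ Ψ hΨmono
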